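/- arXiv:math/9701206 — 7 statements merged into one kernel-verified Lean document; each statement's English description precedes it below -/
import Mathlib

section
/- Let A be a unital Banach algebra and let a ∈ A be invertible with countable spectrum. Then a lies in the connected component of the identity in the group of invertible elements of A. -/
/-!
A countable spectrum not containing `0` misses some ray `{t • w | t ≥ 0}`, `w ≠ 0`. Then
`(1 - s) • a - s • w` is invertible for all `s ∈ [0, 1]`, so the segment from `a` to the scalar
`-w` stays in the invertible group, and `-w` is joined to `1` inside the connected set `ℂˣ`.
-/

open Set

theorem Complex.exists_ray_disjoint_of_countable {S : Set ℂ} (hS : S.Countable) (h0 : 0 ∉ S) :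
    ∃ w : ℂ, w ≠ 0 ∧ ∀ t : ℝ, 0 ≤ t → (t : ℂ) * w ∉ S := by
  obtain ⟨θ, hθS, hθ⟩ := ((hS.image arg).dense_compl ℝ).exists_mem_open isOpen_Ioo
    (nonempty_Ioo.2 Real.pi_pos)
  obtain ⟨w, rfl⟩ : θ ∈ range arg := by
    rw [range_arg]
    exact ⟨by linarith [Real.pi_pos, hθ.1], hθ.2.le⟩
  refine ⟨w, fun hw ↦ by simp [hw] at hθ, fun t ht hmem ↦ ?_⟩
  rcases ht.eq_or_lt with rfl | ht
  · simp_all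
  · exact hθS ⟨_, hmem, arg_real_mul w ht⟩

theorem segment_subset_setOf_isUnit {𝕜 A : Type*} [Field 𝕜] [LinearOrder 𝕜]
    [IsStrictOrderedRing 𝕜] [Ring A] [Algebra 𝕜 A] {a b : A} (hb : IsUnit b)
    (hray : ∀ t : 𝕜, 0 ≤ t → IsUnit (a + t • b)) : segment 𝕜 a b ⊆ {x | IsUnit x} := by
  rintro _ ⟨s, t, hs, ht, hst, rfl⟩
  rcases hs.eq_or_lt with rfl | hs
  · simp_all
  · have hfactor : s • a + t • b = s • (a + (t / s) • b) := by
      rw [smul_add, smul_smul, mul_div_cancel₀ t hs.ne']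
    rw [mem_ofPred, hfactor]
    exact (hray _ (div_nonneg ht hs.le)).smul (Units.mk0 s hs.ne')

section

variable {A : Type*} [Ring A] [TopologicalSpace A]

theorem mem_connectedComponentIn_setOf_isUnit_of_ray [Algebra ℝ A] [ContinuousAdd A]
    [ContinuousSMul ℝ A] {a b : A} (hb : IsUnit b) (hray : ∀ t : ℝ, 0 ≤ t → IsUnit (a + t • b)) :
    a ∈ connectedComponentIn {x | IsUnit x} b := by
  refine (convex_segment b a).isPreconnected.subset_connectedComponentIn (left_mem_segment ℝ b a)
    ?_ (right_mem_segment ℝ b a)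
  rw [segment_symm]
  exact segment_subset_setOf_isUnit hb hray

theorem algebraMap_mem_connectedComponentIn_setOf_isUnit [Algebra ℂ A] [ContinuousSMul ℂ A]
    {z : ℂ} (hz : z ≠ 0) : algebraMap ℂ A z ∈ connectedComponentIn {x | IsUnit x} 1 := by
  have hunits : IsConnected ({0}ᶜ : Set ℂ) :=
    isConnected_compl_singleton_of_one_lt_rank (by simp [Complex.rank_real_complex]) 0
  refine (hunits.isPreconnected.image _ (continuous_algebraMap ℂ A).continuousOn)
    |>.subset_connectedComponentIn ⟨1, one_ne_zero, map_one _⟩ ?_ ⟨z, hz, rfl⟩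
  rintro _ ⟨y, hy, rfl⟩
  exact (Ne.isUnit hy).map _

end

theorem invertible_countable_spectrum_mem_identity_component_general
    {A : Type*} [NormedRing A] [NormedAlgebra ℂ A]
    (a : A) (ha : IsUnit a) (hcount : (spectrum ℂ a).Countable) :
    a ∈ connectedComponentIn {x : A | IsUnit x} 1 := by
  obtain ⟨w, hw, hray⟩ :=
    Complex.exists_ray_disjoint_of_countable hcount (spectrum.zero_notMem ℂ ha)
  have hsegment : a ∈ connectedComponentIn {x | IsUnit x} (algebraMap ℂ A (-w)) := by
    refine mem_connectedComponentIn_setOf_isUnit_of_ray ((neg_ne_zero.2 hw).isUnit.map _)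
      fun t ht ↦ ?_
    convert (spectrum.notMem_iff.1 (hray t ht)).neg using 1
    rw [neg_sub, map_neg, ← Complex.coe_smul, smul_neg, ← sub_eq_add_neg, Algebra.smul_def,
      ← map_mul]
  rwa [connectedComponentIn_eq
    (algebraMap_mem_connectedComponentIn_setOf_isUnit (A := A) (neg_ne_zero.2 hw))]

/-- **Lemma 3.2.** Let `A` be a unital Banach algebra and let `a ∈ A` be invertible with
countable spectrum. Then `a` lies in the connected component of the identity in the group
of invertible elements of `A`. -/
theorem invertible_countable_spectrum_mem_identity_component
    {A : Type*} [NormedRing A] [NormedAlgebra ℂ A] [CompleteSpace A]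
    (a : A) (ha : IsUnit a) (hcount : (spectrum ℂ a).Countable) :
    a ∈ connectedComponentIn {x : A | IsUnit x} 1 :=
  invertible_countable_spectrum_mem_identity_component_general a ha hcount
end

section
/- Let A be a unital Banach algebra that is not finite, i.e., there exist a, b ∈ A with ab = 1 and ba ≠ 1. Then the spectrum of b has non-empty interior in ℂ; in particular, σ(b) is uncountable. -/
open Metric Set

/-- A nonzero idempotent in a normed ring has norm at least 1. -/
lemma one_le_norm_of_idem {A : Type*} [NormedRing A] {e : A} (he : e * e = e) (h0 : e ≠ 0) :
    1 ≤ ‖e‖ := by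
  by_contra h
  push_neg at h
  have hn : 0 < ‖e‖ := norm_pos_iff.mpr h0
  have : ‖e‖ ≤ ‖e‖ * ‖e‖ := by calc ‖e‖ = ‖e * e‖ := by rw [he]
                                   _ ≤ ‖e‖ * ‖e‖ := norm_mul_le _ _
  nlinarith

/-- If a unital Banach algebra `A` is not finite, witnessed by `a, b ∈ A` with `a * b = 1`
and `b * a ≠ 1`, then the spectrum of `b` has non-empty interior; in particular it is
uncountable. -/
theorem spectrum_nonempty_interior_of_not_finite
    {A : Type*} [NormedRing A] [NormedAlgebra ℂ A] [CompleteSpace A]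
    (a b : A) (hab : a * b = 1) (hba : b * a ≠ 1) :
    (interior (spectrum ℂ b)).Nonempty ∧ ¬ (spectrum ℂ b).Countable := by
  have ha0 : a ≠ 0 := by
    rintro rfl
    rw [zero_mul] at hab
    exact hba (by rw [mul_zero, hab])
  have hna : (0:ℝ) < ‖a‖ := norm_pos_iff.mpr ha0
  set r : ℝ := ‖a‖⁻¹ with hr
  have hrpos : (0:ℝ) < r := inv_pos.mpr hna
  -- the defect function
  set f : ℂ → A := fun z => 1 - (b - z • 1) * (Ring.inverse (1 - z • a) * a) with hf
  -- for z in the ball, 1 - z • a is a unit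
  have hunit : ∀ z : ℂ, z ∈ ball (0:ℂ) r → IsUnit (1 - z • a) := by
    intro z hz
    have hz' : ‖z • a‖ < 1 := by
      rw [norm_smul]
      have : ‖z‖ < r := by simpa using hz
      calc ‖z‖ * ‖a‖ < r * ‖a‖ := by exact mul_lt_mul_of_pos_right this hna
        _ = 1 := inv_mul_cancel₀ (ne_of_gt hna)
    exact (Units.oneSub (z • a) hz').isUnit
  -- left inverse property
  have hleft : ∀ z : ℂ, z ∈ ball (0:ℂ) r →
      (Ring.inverse (1 - z • a) * a) * (b - z • 1) = 1 := by
    intro z hz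
    have : a * (b - z • 1) = 1 - z • a := by
      rw [mul_sub]
      simp [hab, mul_smul_comm]
    rw [mul_assoc, this, Ring.inverse_mul_cancel _ (hunit z hz)]
  -- f z is idempotent on the ball
  have hidem : ∀ z : ℂ, z ∈ ball (0:ℂ) r → f z * f z = f z := by
    intro z hz
    have h1 := hleft z hz
    simp only [hf]
    set x : A := (b - z • 1) * (Ring.inverse (1 - z • a) * a) with hx
    have hxx : x * x = x := by
      calc x * x = (b - z • 1) * ((Ring.inverse (1 - z • a) * a * (b - z • 1)) *
            (Ring.inverse (1 - z • a) * a)) := by rw [hx]; noncomm_ring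
        _ = x := by rw [h1, one_mul, hx]
    calc (1 - x) * (1 - x) = 1 - x - x + x * x := by noncomm_ring
      _ = 1 - x := by rw [hxx]; noncomm_ring
  -- f is continuous at points of the ball
  have hcont : ∀ z : ℂ, z ∈ ball (0:ℂ) r → ContinuousAt f z := by
    intro z hz
    obtain ⟨u, hu⟩ := hunit z hz
    have h1 : ContinuousAt (fun w : ℂ => (1 : A) - w • a) z := by fun_prop
    have h2 : ContinuousAt (fun w : ℂ => Ring.inverse (1 - w • a)) z := by
      have hg : ContinuousAt Ring.inverse ((1:A) - z • a) :=
        hu ▸ NormedRing.inverse_continuousAt u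
      have := ContinuousAt.comp (x := z) (g := Ring.inverse)
        (f := fun w : ℂ => (1:A) - w • a) hg h1
      simpa [Function.comp_def] using this
    simp only [hf]
    fun_prop
  -- key claim: ball 0 r ⊆ spectrum ℂ b
  have hball : ball (0:ℂ) r ⊆ spectrum ℂ b := by
    intro z hz
    rw [spectrum.mem_iff]
    intro hz_unit
    -- then f z = 0
    have hbz : IsUnit (b - z • 1) := by
      have : b - z • 1 = -(algebraMap ℂ A z - b) := by
        simp [Algebra.algebraMap_eq_smul_one]
      rw [this]
      exact hz_unit.neg
    have hfz : f z = 0 := by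
      obtain ⟨u, hu⟩ := hbz
      have h1 := hleft z hz
      have h2 : (b - z • 1) * (↑u⁻¹ : A) = 1 := by rw [← hu]; exact u.mul_inv
      have hinv : Ring.inverse (1 - z • a) * a = (↑u⁻¹ : A) := by
        calc Ring.inverse (1 - z • a) * a
            = (Ring.inverse (1 - z • a) * a) * ((b - z • 1) * ↑u⁻¹) := by rw [h2, mul_one]
          _ = (Ring.inverse (1 - z • a) * a * (b - z • 1)) * ↑u⁻¹ := by noncomm_ring
          _ = ↑u⁻¹ := by rw [h1, one_mul]
      simp only [hf, hinv, h2, sub_self]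
    -- f 0 ≠ 0
    have hf0 : f 0 ≠ 0 := by
      have : f 0 = 1 - b * a := by
        simp [hf, Ring.inverse_one]
      rw [this]
      intro h
      exact hba (sub_eq_zero.mp h).symm
    -- connectedness argument
    set U : Set ℂ := {w ∈ ball (0:ℂ) r | ‖f w‖ < 1/2} with hU
    set V : Set ℂ := {w ∈ ball (0:ℂ) r | 1/2 < ‖f w‖} with hV
    have hUopen : IsOpen U := by
      rw [isOpen_iff_mem_nhds]
      rintro w ⟨hw1, hw2⟩
      have h1 : ball (0:ℂ) r ∈ nhds w := (isOpen_ball).mem_nhds hw1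
      have h2 : {w' | ‖f w'‖ < 1/2} ∈ nhds w := by
        have := (hcont w hw1).norm
        exact this.eventually_lt continuousAt_const hw2
      exact Filter.inter_mem h1 h2
    have hVopen : IsOpen V := by
      rw [isOpen_iff_mem_nhds]
      rintro w ⟨hw1, hw2⟩
      have h1 : ball (0:ℂ) r ∈ nhds w := (isOpen_ball).mem_nhds hw1
      have h2 : {w' | 1/2 < ‖f w'‖} ∈ nhds w := by
        exact (continuousAt_const.eventually_lt (hcont w hw1).norm hw2)
      exact Filter.inter_mem h1 h2
    have hcover : ball (0:ℂ) r ⊆ U ∪ V := by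
      intro w hw
      rcases eq_or_ne (f w) 0 with h | h
      · left; exact ⟨hw, by simp [h]⟩
      · right
        refine ⟨hw, ?_⟩
        have := one_le_norm_of_idem (hidem w hw) h
        linarith
    have hpre : IsPreconnected (ball (0:ℂ) r) := (convex_ball (0:ℂ) r).isPreconnected
    have hUne : (ball (0:ℂ) r ∩ U).Nonempty := ⟨z, hz, ⟨hz, by simp [hfz]⟩⟩
    have hVne : (ball (0:ℂ) r ∩ V).Nonempty := by
      refine ⟨0, by simpa using hrpos, ⟨by simpa using hrpos, ?_⟩⟩
      have := one_le_norm_of_idem (hidem 0 (by simpa using hrpos)) hf0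
      linarith
    obtain ⟨w, _, ⟨_, hw2⟩, ⟨_, hw4⟩⟩ := hpre U V hUopen hVopen hcover hUne hVne
    linarith
  constructor
  · exact ⟨0, interior_maximal hball isOpen_ball (by simpa using hrpos)⟩
  · intro hcount
    have hc : (ball (0:ℂ) r).Countable := hcount.mono hball
    have hm : MeasureTheory.volume (ball (0:ℂ) r) = 0 := hc.measure_zero _
    have := (Metric.measure_ball_pos MeasureTheory.volume (0:ℂ) hrpos).ne'
    exact this hm
end

section
/- Let A be a unital Banach algebra, and let a, b ∈ A satisfy ab = 1 and ba ≠ 1, with a ≠ 0. Then for every ζ ∈ ℂ with |ζ| < 1/‖a‖, ζ belongs to the spectrum of b. -/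
/-!
Since `a * b = 1`, we have `a * (ζ • 1 - b) = -(1 - ζ • a)`. For `‖ζ‖ ‖a‖ < 1` the right-hand side is
invertible by the Neumann series, so if `ζ • 1 - b` were invertible then so would be `a`, and a
one-sided inverse of a unit is two-sided, contradicting `b * a ≠ 1`.
-/

theorem mul_eq_one_symm_of_isUnit_left {M : Type*} [Monoid M] {a b : M} (ha : IsUnit a)
    (hab : a * b = 1) : b * a = 1 := by
  obtain ⟨u, rfl⟩ := ha
  rw [← Units.inv_eq_of_mul_eq_one_right hab, u.inv_mul]

theorem norm_smul_lt_one_of_norm_lt_one_div {𝕜 E : Type*} [NormedField 𝕜]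
    [SeminormedAddCommGroup E] [NormedSpace 𝕜 E] {ζ : 𝕜} {a : E} (hζ : ‖ζ‖ < 1 / ‖a‖) :
    ‖ζ • a‖ < 1 := by
  have ha : 0 < ‖a‖ := one_div_pos.mp ((norm_nonneg ζ).trans_lt hζ)
  calc ‖ζ • a‖ = ‖ζ‖ * ‖a‖ := norm_smul ζ a
    _ < 1 := (lt_div_iff₀ ha).mp hζ

theorem mul_algebraMap_sub_of_mul_eq_one {R A : Type*} [CommRing R] [Ring A] [Algebra R A]
    {a b : A} (hab : a * b = 1) (ζ : R) :
    a * (algebraMap R A ζ - b) = -(1 - ζ • a) := by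
  rw [mul_sub, hab, Algebra.algebraMap_eq_smul_one, mul_smul_comm, mul_one, neg_sub]

theorem isUnit_of_mul_eq_one_of_notMem_spectrum {R A : Type*} [CommRing R] [Ring A] [Algebra R A]
    {a b : A} (hab : a * b = 1) {ζ : R} (hζa : IsUnit (1 - ζ • a)) (hζb : ζ ∉ spectrum R b) :
    IsUnit a := by
  obtain ⟨u, hu⟩ := spectrum.notMem_iff.mp hζb
  rw [← Units.isUnit_mul_units a u, hu, mul_algebraMap_sub_of_mul_eq_one hab]
  exact hζa.neg

theorem disc_subset_spectrum_of_one_sided_inverse_general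
    {A : Type*} [NormedRing A] [NormedAlgebra ℂ A] [CompleteSpace A]
    (a b : A) (hab : a * b = 1) (hba : b * a ≠ 1) :
    ∀ ζ : ℂ, ‖ζ‖ < 1 / ‖a‖ → ζ ∈ spectrum ℂ b := by
  intro ζ hζ
  by_contra hζb
  have hζa : IsUnit (1 - ζ • a) :=
    isUnit_one_sub_of_norm_lt_one (norm_smul_lt_one_of_norm_lt_one_div hζ)
  exact hba (mul_eq_one_symm_of_isUnit_left
    (isUnit_of_mul_eq_one_of_notMem_spectrum hab hζa hζb) hab)

/-- Let `A` be a unital Banach algebra and `a, b ∈ A` with `a * b = 1`, `b * a ≠ 1`, and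
`a ≠ 0`. Then every `ζ ∈ ℂ` with `|ζ| < 1 / ‖a‖` belongs to the spectrum of `b`. -/
theorem disc_subset_spectrum_of_one_sided_inverse
    {A : Type*} [NormedRing A] [NormedAlgebra ℂ A] [CompleteSpace A]
    (a b : A) (hab : a * b = 1) (hba : b * a ≠ 1) (ha : a ≠ 0) :
    ∀ ζ : ℂ, ‖ζ‖ < 1 / ‖a‖ → ζ ∈ spectrum ℂ b :=
  disc_subset_spectrum_of_one_sided_inverse_general a b hab hba
end

section
/- Let X be a complex Banach space and let P, Q be bounded idempotent operators on X. Then P ∼₀ Q (i.e., there exist bounded operators R, T on X with P = RT and Q = TR) if and only if the range of P is linearly homeomorphic to the range of Q. -/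
/-!
An isomorphism `e : ran P ≃ ran Q` yields `R = ι_P e⁻¹ Q` and `T = ι_Q e P`, with `R T = P` and
`T R = Q` because `P` and `Q` act as the identity on their ranges. Conversely, if `R T = P` and
`T R = Q` then `R Q T = P² = P` and `T P R = Q² = Q`, so the compressions `Q T P` and `P R Q`
are mutually inverse between the ranges.
-/

namespace ContinuousLinearMap

variable {R M : Type*} [Semiring R] [TopologicalSpace M] [AddCommMonoid M] [Module R M]

theorem rangeRestrict_comp_subtypeL_range {P : M →L[R] M} (hP : IsIdempotentElem P) :
    P.rangeRestrict ∘L P.range.subtypeL = .id R P.range := by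
  ext ⟨x, hx⟩
  exact (LinearMap.IsIdempotentElem.mem_range_iff (IsIdempotentElem.toLinearMap hP)).1 hx

theorem comp_subtypeL_range {P : M →L[R] M} (hP : IsIdempotentElem P) :
    P ∘L P.range.subtypeL = P.range.subtypeL := by
  ext ⟨x, hx⟩
  exact (LinearMap.IsIdempotentElem.mem_range_iff (IsIdempotentElem.toLinearMap hP)).1 hx

def compressRange (P Q B : M →L[R] M) : P.range →L[R] Q.range :=
  Q.rangeRestrict ∘L B ∘L P.range.subtypeL

def extendRange (P Q : M →L[R] M) (f : P.range →L[R] Q.range) : M →L[R] M :=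
  Q.range.subtypeL ∘L f ∘L P.rangeRestrict

theorem compressRange_comp_compressRange {P Q A B : M →L[R] M} (hQ : IsIdempotentElem Q)
    (h : B ∘L P ∘L A = Q) : compressRange P Q B ∘L compressRange Q P A = .id R Q.range :=
  calc compressRange P Q B ∘L compressRange Q P A
      = Q.rangeRestrict ∘L (B ∘L (P.range.subtypeL ∘L P.rangeRestrict) ∘L A) ∘L
          Q.range.subtypeL := by simp only [compressRange, comp_assoc]
    _ = Q.rangeRestrict ∘L Q.range.subtypeL := by
      rw [subtypeL_comp_codRestrict, h, comp_subtypeL_range hQ]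
    _ = .id R Q.range := rangeRestrict_comp_subtypeL_range hQ

theorem extendRange_mul_extendRange {P Q : M →L[R] M} (hQ : IsIdempotentElem Q)
    {f : P.range →L[R] Q.range} {g : Q.range →L[R] P.range} (hgf : g ∘L f = .id R P.range) :
    extendRange Q P g * extendRange P Q f = P :=
  calc extendRange Q P g * extendRange P Q f
      = P.range.subtypeL ∘L g ∘L (Q.rangeRestrict ∘L Q.range.subtypeL) ∘L f ∘L
          P.rangeRestrict := by simp only [extendRange, mul_def, comp_assoc]
    _ = P := by
      rw [rangeRestrict_comp_subtypeL_range hQ, id_comp, ← comp_assoc g, hgf, id_comp,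
        subtypeL_comp_codRestrict]

theorem exists_mul_eq_and_mul_eq_iff_nonempty_range_equiv {P Q : M →L[R] M}
    (hP : IsIdempotentElem P) (hQ : IsIdempotentElem Q) :
    (∃ A B : M →L[R] M, A * B = P ∧ B * A = Q) ↔ Nonempty (P.range ≃L[R] Q.range) := by
  constructor
  · rintro ⟨A, B, hAB, hBA⟩
    have hAQB : A ∘L Q ∘L B = P := by
      rw [← hBA, ← hP.eq, ← hAB]; simp only [mul_def, comp_assoc]
    have hBPA : B ∘L P ∘L A = Q := by
      rw [← hAB, ← hQ.eq, ← hBA]; simp only [mul_def, comp_assoc]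
    exact ⟨.equivOfInverse' (compressRange P Q B) (compressRange Q P A)
      (compressRange_comp_compressRange hQ hBPA) (compressRange_comp_compressRange hP hAQB)⟩
  · rintro ⟨e⟩
    exact ⟨extendRange Q P e.symm, extendRange P Q e,
      extendRange_mul_extendRange hQ e.coe_symm_comp_coe,
      extendRange_mul_extendRange hP e.coe_comp_coe_symm⟩

end ContinuousLinearMap

theorem mvNeq_iff_range_linearly_homeomorphic_general
    {X : Type*} [NormedAddCommGroup X] [NormedSpace ℂ X]
    (P Q : X →L[ℂ] X) (hP : P * P = P) (hQ : Q * Q = Q) :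
    (∃ R T : X →L[ℂ] X, R * T = P ∧ T * R = Q) ↔
      Nonempty (↥(LinearMap.range (P : X →ₗ[ℂ] X)) ≃L[ℂ] ↥(LinearMap.range (Q : X →ₗ[ℂ] X))) :=
  ContinuousLinearMap.exists_mul_eq_and_mul_eq_iff_nonempty_range_equiv hP hQ

/-- **Proposition 2.1.** For idempotent operators `P, Q` on a complex Banach space `X`,
`P ∼₀ Q` (i.e. `P = R * T` and `Q = T * R` for some bounded operators `R, T`) if and only
if the range of `P` is linearly homeomorphic to the range of `Q`. -/
theorem mvNeq_iff_range_linearly_homeomorphic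
    {X : Type*} [NormedAddCommGroup X] [NormedSpace ℂ X] [CompleteSpace X]
    (P Q : X →L[ℂ] X) (hP : P * P = P) (hQ : Q * Q = Q) :
    (∃ R T : X →L[ℂ] X, R * T = P ∧ T * R = Q) ↔
      Nonempty (↥(LinearMap.range (P : X →ₗ[ℂ] X)) ≃L[ℂ] ↥(LinearMap.range (Q : X →ₗ[ℂ] X))) :=
  mvNeq_iff_range_linearly_homeomorphic_general P Q hP hQ
end

section
/- Let X be a Banach space such that Xⁿ is linearly homeomorphic to X^{n+k} for some natural numbers n, k ≥ 1. Then every element of K₀(B(X)) can be written as [P]₀ − [Q]₀ where P and Q are idempotent n×n matrices over B(X), i.e., idempotent bounded operators on Xⁿ. -/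
noncomputable section

/-- The type of idempotent square matrices (of arbitrary size) over a ring. -/
def IdemMat (A : Type*) [Ring A] := Σ n : ℕ, {P : Matrix (Fin n) (Fin n) A // P * P = P}

/-- Block-diagonal sum of two square matrices. -/
def blockMat {A : Type*} [Ring A] {m n : ℕ} (P : Matrix (Fin m) (Fin m) A)
    (Q : Matrix (Fin n) (Fin n) A) : Matrix (Fin (m + n)) (Fin (m + n)) A :=
  (Matrix.fromBlocks P 0 0 Q).submatrix finSumFinEquiv.symm finSumFinEquiv.symm

lemma blockMat_idem {A : Type*} [Ring A] {m n : ℕ} {P : Matrix (Fin m) (Fin m) A}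
    {Q : Matrix (Fin n) (Fin n) A} (hP : P * P = P) (hQ : Q * Q = Q) :
    blockMat P Q * blockMat P Q = blockMat P Q := by
  unfold blockMat
  rw [Matrix.submatrix_mul_equiv, Matrix.fromBlocks_multiply]
  simp [hP, hQ]

/-- Block-diagonal sum of idempotent matrices. -/
def blockIdem {A : Type*} [Ring A] (x y : IdemMat A) : IdemMat A :=
  ⟨x.1 + y.1, ⟨blockMat x.2.1 y.2.1, blockMat_idem x.2.2 y.2.2⟩⟩

/-- The empty (0 × 0) idempotent matrix. -/
def zeroIdem (A : Type*) [Ring A] : IdemMat A := ⟨0, ⟨0, by simp⟩⟩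

/-- `n`-fold block-diagonal sum of an idempotent matrix with itself. -/
def iterIdem {A : Type*} [Ring A] : ℕ → IdemMat A → IdemMat A
  | 0, _ => zeroIdem A
  | n + 1, x => blockIdem (iterIdem n x) x

/-- Murray–von Neumann equivalence of idempotent matrices. -/
def MvN {A : Type*} [Ring A] (x y : IdemMat A) : Prop :=
  ∃ (R : Matrix (Fin x.1) (Fin y.1) A) (T : Matrix (Fin y.1) (Fin x.1) A),
    R * T = x.2.1 ∧ T * R = y.2.1

/-- The relation defining the Grothendieck group of the semigroup of
Murray–von Neumann classes: `(P, Q)` and `(P', Q')` are identified when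
`P ⊕ Q' ⊕ E ∼₀ P' ⊕ Q ⊕ E` for some idempotent `E`. -/
def K0Rel (A : Type*) [Ring A] (x y : IdemMat A × IdemMat A) : Prop :=
  ∃ e : IdemMat A, MvN (blockIdem (blockIdem x.1 y.2) e) (blockIdem (blockIdem y.1 x.2) e)

/-- The group `K₀` of a ring, realized as the Grothendieck group of the semigroup of
Murray–von Neumann equivalence classes of idempotent matrices: its elements are the
formal differences `[P]₀ - [Q]₀`. -/
def K0 (A : Type*) [Ring A] := Quot (K0Rel A)

/-- The element `[P]₀ - [Q]₀` of `K₀`. -/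
def K0classOf {A : Type*} [Ring A] (x y : IdemMat A) : K0 A := Quot.mk (K0Rel A) (x, y)

/-- The element `[P]₀` of `K₀`. -/
def K0class {A : Type*} [Ring A] (x : IdemMat A) : K0 A := K0classOf x (zeroIdem A)

section Aux

variable {A : Type*} [Ring A]

/-- The identity idempotent of size `a`. -/
def oneIdem (A : Type*) [Ring A] (a : ℕ) : IdemMat A := ⟨a, ⟨1, one_mul 1⟩⟩

lemma MvN_refl (x : IdemMat A) : MvN x x := ⟨x.2.1, x.2.1, x.2.2, x.2.2⟩

lemma MvN_symm {x y : IdemMat A} (h : MvN x y) : MvN y x := by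
  obtain ⟨R, T, h1, h2⟩ := h; exact ⟨T, R, h2, h1⟩

lemma MvN_trans {x y z : IdemMat A} (h1 : MvN x y) (h2 : MvN y z) : MvN x z := by
  obtain ⟨R1, T1, hRT1, hTR1⟩ := h1
  obtain ⟨R2, T2, hRT2, hTR2⟩ := h2
  refine ⟨R1 * R2, T2 * T1, ?_, ?_⟩
  · rw [Matrix.mul_assoc R1 R2, ← Matrix.mul_assoc R2 T2 T1, hRT2, ← hTR1,
      Matrix.mul_assoc T1 R1 T1, ← Matrix.mul_assoc R1 T1, hRT1, x.2.2]
  · rw [Matrix.mul_assoc T2 T1, ← Matrix.mul_assoc T1 R1 R2, hTR1, ← hRT2,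
      Matrix.mul_assoc R2 T2 R2, ← Matrix.mul_assoc T2 R2, hTR2, z.2.2]

lemma MvN_block {x x' y y' : IdemMat A} (h1 : MvN x x') (h2 : MvN y y') :
    MvN (blockIdem x y) (blockIdem x' y') := by
  obtain ⟨a, P, hP⟩ := x
  obtain ⟨a', P', hP'⟩ := x'
  obtain ⟨b, Q, hQ⟩ := y
  obtain ⟨b', Q', hQ'⟩ := y'
  have h1' : ∃ (R : Matrix (Fin a) (Fin a') A) (T : Matrix (Fin a') (Fin a) A),
      R * T = P ∧ T * R = P' := h1
  have h2' : ∃ (R : Matrix (Fin b) (Fin b') A) (T : Matrix (Fin b') (Fin b) A),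
      R * T = Q ∧ T * R = Q' := h2
  obtain ⟨R1, T1, hRT1, hTR1⟩ := h1'
  obtain ⟨R2, T2, hRT2, hTR2⟩ := h2'
  show ∃ (R : Matrix (Fin (a + b)) (Fin (a' + b')) A)
      (T : Matrix (Fin (a' + b')) (Fin (a + b)) A),
      R * T = blockMat P Q ∧ T * R = blockMat P' Q'
  refine ⟨(Matrix.fromBlocks R1 0 0 R2).submatrix finSumFinEquiv.symm finSumFinEquiv.symm,
    (Matrix.fromBlocks T1 0 0 T2).submatrix finSumFinEquiv.symm finSumFinEquiv.symm, ?_, ?_⟩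
  · unfold blockMat
    rw [Matrix.submatrix_mul_equiv, Matrix.fromBlocks_multiply]
    simp [hRT1, hRT2]
  · unfold blockMat
    rw [Matrix.submatrix_mul_equiv, Matrix.fromBlocks_multiply]
    simp [hTR1, hTR2]

lemma blockMat_one {a b : ℕ} :
    blockMat (1 : Matrix (Fin a) (Fin a) A) (1 : Matrix (Fin b) (Fin b) A) = 1 := by
  unfold blockMat
  rw [Matrix.fromBlocks_one]
  simp

lemma blockIdem_one {a b : ℕ} :
    blockIdem (oneIdem A a) (oneIdem A b) = oneIdem A (a + b) :=
  congrArg (fun M => (⟨a + b, M⟩ : IdemMat A)) (Subtype.ext blockMat_one)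

lemma MvN_pad (a j : ℕ) (M : Matrix (Fin a) (Fin a) A) (hM : M * M = M) :
    MvN (⟨a, ⟨M, hM⟩⟩ : IdemMat A)
      (blockIdem ⟨a, ⟨M, hM⟩⟩ ⟨j, ⟨0, by simp⟩⟩) := by
  show ∃ (R : Matrix (Fin a) (Fin (a + j)) A) (T : Matrix (Fin (a + j)) (Fin a) A),
      R * T = M ∧ T * R = blockMat M 0
  refine ⟨(Matrix.fromCols M 0).submatrix ⇑(Equiv.refl (Fin a)) ⇑finSumFinEquiv.symm,
    (Matrix.fromRows M 0).submatrix ⇑finSumFinEquiv.symm ⇑(Equiv.refl (Fin a)), ?_, ?_⟩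
  · rw [Matrix.submatrix_mul_equiv, Matrix.fromCols_mul_fromRows]
    simp [hM]
  · rw [Matrix.submatrix_mul_equiv, Matrix.fromRows_mul_fromCols]
    unfold blockMat
    simp [hM]

lemma MvN_conj {n s : ℕ} (h1 : MvN (oneIdem A n) (oneIdem A s))
    (M : Matrix (Fin s) (Fin s) A) (hM : M * M = M) :
    ∃ (P : Matrix (Fin n) (Fin n) A) (hP : P * P = P),
      MvN (⟨n, ⟨P, hP⟩⟩ : IdemMat A) ⟨s, ⟨M, hM⟩⟩ := by
  have h1' : ∃ (U : Matrix (Fin n) (Fin s) A) (V : Matrix (Fin s) (Fin n) A),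
      U * V = 1 ∧ V * U = 1 := h1
  obtain ⟨U, V, hUV, hVU⟩ := h1'
  have hP : U * M * V * (U * M * V) = U * M * V := by
    simp only [Matrix.mul_assoc]
    rw [← Matrix.mul_assoc V U, hVU, Matrix.one_mul, ← Matrix.mul_assoc M M, hM]
  refine ⟨U * M * V, hP, ?_⟩
  show ∃ (R : Matrix (Fin n) (Fin s) A) (T : Matrix (Fin s) (Fin n) A),
      R * T = U * M * V ∧ T * R = M
  refine ⟨U * M, M * V, ?_, ?_⟩
  · simp only [Matrix.mul_assoc]
    rw [← Matrix.mul_assoc M M, hM]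
  · simp only [Matrix.mul_assoc]
    rw [← Matrix.mul_assoc V U, hVU, Matrix.one_mul, hM]

lemma one_iter {n k : ℕ} (h0 : MvN (oneIdem A n) (oneIdem A (n + k))) :
    ∀ m : ℕ, MvN (oneIdem A n) (oneIdem A (n + m * k)) := by
  intro m
  induction m with
  | zero => rw [show n + 0 * k = n by ring]; exact MvN_refl _
  | succ m ih =>
    have step : MvN (oneIdem A (n + m * k)) (oneIdem A (n + (m + 1) * k)) := by
      have hb := MvN_block h0 (MvN_refl (oneIdem A (m * k)))
      rw [blockIdem_one, blockIdem_one] at hb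
      rwa [show n + k + m * k = n + (m + 1) * k by ring] at hb
    exact MvN_trans ih step

lemma exists_size_n {n k : ℕ} (hk : 1 ≤ k)
    (hone : ∀ m : ℕ, MvN (oneIdem A n) (oneIdem A (n + m * k))) (x : IdemMat A) :
    ∃ (P : Matrix (Fin n) (Fin n) A) (hP : P * P = P),
      MvN (⟨n, ⟨P, hP⟩⟩ : IdemMat A) x := by
  obtain ⟨a, M, hM⟩ := x
  have ha : a ≤ n + a * k := by
    have : a * 1 ≤ a * k := Nat.mul_le_mul_left a hk
    omega
  set j := n + a * k - a with hj
  have hs : a + j = n + a * k := by omega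
  have hpad := MvN_pad (A := A) a j M hM
  have h1 : MvN (oneIdem A n) (oneIdem A (a + j)) := by rw [hs]; exact hone a
  obtain ⟨P, hP, hPM⟩ := MvN_conj h1 (blockMat M (0 : Matrix (Fin j) (Fin j) A))
    (blockMat_idem hM (by simp))
  exact ⟨P, hP, MvN_trans hPM (MvN_symm hpad)⟩

end Aux

section CLM

variable {X : Type*} [NormedAddCommGroup X] [NormedSpace ℂ X]

/-- The continuous linear map `X →L (Fin p → X)` inserting at coordinate `j`. -/
def singCLM (p : ℕ) (j : Fin p) : X →L[ℂ] (Fin p → X) :=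
  { LinearMap.single ℂ (fun _ => X) j with cont := by exact continuous_single (A := fun _ : Fin p => X) j }

@[simp] lemma singCLM_apply (p : ℕ) (j : Fin p) (x : X) :
    singCLM p j x = (Pi.single j x : Fin p → X) := rfl

/-- The matrix of a continuous linear map between finite powers of `X`. -/
def ofCLM {a b : ℕ} (u : (Fin a → X) →L[ℂ] (Fin b → X)) :
    Matrix (Fin b) (Fin a) (X →L[ℂ] X) :=
  Matrix.of fun i j => (ContinuousLinearMap.proj i).comp (u.comp (singCLM a j))

lemma ofCLM_mul {a b c : ℕ} (u : (Fin b → X) →L[ℂ] (Fin c → X))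
    (v : (Fin a → X) →L[ℂ] (Fin b → X)) :
    ofCLM (u.comp v) = ofCLM u * ofCLM v := by
  ext i j x
  simp only [ofCLM, Matrix.mul_apply, Matrix.of_apply, ContinuousLinearMap.sum_apply,
    ContinuousLinearMap.mul_apply, ContinuousLinearMap.comp_apply,
    ContinuousLinearMap.proj_apply, singCLM_apply]
  rw [← Finset.sum_apply, ← map_sum, Finset.univ_sum_single]

lemma ofCLM_id {a : ℕ} :
    ofCLM (ContinuousLinearMap.id ℂ (Fin a → X)) = 1 := by
  ext i j x
  rcases eq_or_ne i j with rfl | hij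
  · simp [ofCLM, Matrix.one_apply_eq]
  · simp [ofCLM, Matrix.one_apply_ne hij, Pi.single_eq_of_ne hij]

lemma mvn_one_of_equiv {a b : ℕ} (e : (Fin a → X) ≃L[ℂ] (Fin b → X)) :
    MvN (oneIdem (X →L[ℂ] X) a) (oneIdem (X →L[ℂ] X) b) := by
  show ∃ (R : Matrix (Fin a) (Fin b) (X →L[ℂ] X)) (T : Matrix (Fin b) (Fin a) (X →L[ℂ] X)),
      R * T = 1 ∧ T * R = 1
  refine ⟨ofCLM (e.symm : (Fin b → X) →L[ℂ] (Fin a → X)),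
    ofCLM (e : (Fin a → X) →L[ℂ] (Fin b → X)), ?_, ?_⟩
  · rw [← ofCLM_mul, show (e.symm : (Fin b → X) →L[ℂ] (Fin a → X)).comp
      (e : (Fin a → X) →L[ℂ] (Fin b → X)) = ContinuousLinearMap.id ℂ (Fin a → X) from
      ContinuousLinearMap.ext fun x => by simp]
    exact ofCLM_id
  · rw [← ofCLM_mul, show (e : (Fin a → X) →L[ℂ] (Fin b → X)).comp
      (e.symm : (Fin b → X) →L[ℂ] (Fin a → X)) = ContinuousLinearMap.id ℂ (Fin b → X) from
      ContinuousLinearMap.ext fun x => by simp]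
    exact ofCLM_id

end CLM

/-- **Lemma 2.2.** If `Xⁿ` is linearly homeomorphic to `X^(n+k)` for some `n, k ≥ 1`,
then every element of `K₀(B(X))` is of the form `[P]₀ - [Q]₀` with `P, Q` idempotent
`n × n` matrices over `B(X)`. -/
theorem K0_of_operators_generated_in_size_n
    {X : Type*} [NormedAddCommGroup X] [NormedSpace ℂ X]
    (n k : ℕ) (hn : 1 ≤ n) (hk : 1 ≤ k)
    (h : Nonempty ((Fin n → X) ≃L[ℂ] (Fin (n + k) → X))) :
    ∀ x : K0 (X →L[ℂ] X), ∃ (P Q : Matrix (Fin n) (Fin n) (X →L[ℂ] X))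
      (hP : P * P = P) (hQ : Q * Q = Q),
        x = K0classOf ⟨n, ⟨P, hP⟩⟩ ⟨n, ⟨Q, hQ⟩⟩ := by
  obtain ⟨e⟩ := h
  have h0 : MvN (oneIdem (X →L[ℂ] X) n) (oneIdem (X →L[ℂ] X) (n + k)) := mvn_one_of_equiv e
  have hone := one_iter h0
  intro x
  induction x using Quot.ind with
  | _ p =>
    obtain ⟨a, b⟩ := p
    obtain ⟨P, hP, hPa⟩ := exists_size_n hk hone a
    obtain ⟨Q, hQ, hQb⟩ := exists_size_n hk hone b
    refine ⟨P, Q, hP, hQ, ?_⟩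
    exact Quot.sound ⟨zeroIdem _, MvN_block (MvN_block (MvN_symm hPa) hQb) (MvN_refl _)⟩
end
end

section
/- Let A be a unital, properly infinite Banach algebra, i.e., there exist a₁, a₂, b₁, b₂ ∈ A with bₗaₖ = δₖₗ·1 for k, l ∈ {1,2}. Then the map u ↦ [u]₁ from Inv(A) to K₁(A) is surjective. In particular, if Inv(A) is connected then K₁(A) = {0}. -/
set_option maxHeartbeats 1000000

noncomputable section

/-- Pad a square matrix to size `k` by extending with the identity. -/
def padMat {A : Type*} [Ring A] {m : ℕ} (U : Matrix (Fin m) (Fin m) A) (k : ℕ) :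
    Matrix (Fin k) (Fin k) A :=
  fun i j =>
    if hi : (i : ℕ) < m then
      (if hj : (j : ℕ) < m then U ⟨i, hi⟩ ⟨j, hj⟩ else 0)
    else (if (i : ℕ) = (j : ℕ) then 1 else 0)

/-- The type of invertible square matrices (of arbitrary size) over a ring. -/
def InvMat (A : Type*) [Ring A] := {x : Σ n : ℕ, Matrix (Fin n) (Fin n) A // IsUnit x.2}

/-- Two invertible matrices are `K₁`-equivalent if after padding with the identity to a
common size they can be joined by a continuous path of invertible matrices. -/
def K1Rel (A : Type*) [Ring A] [TopologicalSpace A] (x y : InvMat A) : Prop :=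
  ∃ k : ℕ, x.1.1 ≤ k ∧ y.1.1 ≤ k ∧
    ∃ W : ℝ → Matrix (Fin k) (Fin k) A, Continuous W ∧
      (∀ t ∈ Set.Icc (0:ℝ) 1, IsUnit (W t)) ∧ W 0 = padMat x.1.2 k ∧ W 1 = padMat y.1.2 k

/-- The group `K₁` of a topological ring: homotopy classes of invertible matrices. -/
def K1 (A : Type*) [Ring A] [TopologicalSpace A] := Quot (K1Rel A)

lemma isUnit_one_by_one {A : Type*} [Ring A] {u : A} (h : IsUnit u) :
    IsUnit (Matrix.of ![![u]] : Matrix (Fin 1) (Fin 1) A) := by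
  obtain ⟨v, hv1, hv2⟩ := isUnit_iff_exists.1 h
  refine isUnit_iff_exists.2 ⟨Matrix.of ![![v]], ?_, ?_⟩ <;>
  · ext i j
    fin_cases i <;> fin_cases j <;>
      simp [Matrix.mul_apply, hv1, hv2]

/-- The class `[u]₁ ∈ K₁(A)` of an invertible element `u ∈ A`, viewed as a `1 × 1` matrix. -/
def K1classOfUnit {A : Type*} [Ring A] [TopologicalSpace A] {u : A} (h : IsUnit u) : K1 A :=
  Quot.mk (K1Rel A) ⟨⟨1, Matrix.of ![![u]]⟩, isUnit_one_by_one h⟩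


section Aux
open Matrix


open Matrix in
lemma elementary_path {A : Type*} [NormedRing A] [NormedAlgebra ℂ A]
    {p q : Type} [Fintype p] [Fintype q] [DecidableEq p] [DecidableEq q]
    (X : Matrix p q A) (Y : Matrix q p A) (R : Matrix p p A)
    (hR1 : (1 + X * Y) * R = 1) (hR2 : R * (1 + X * Y) = 1) :
    ∃ W : ℝ → Matrix (p ⊕ q) (p ⊕ q) A, Continuous W ∧ (∀ t : ℝ, IsUnit (W t)) ∧
      W 0 = fromBlocks (1 + X * Y) 0 0 1 ∧ W 1 = fromBlocks 1 0 0 (1 + Y * X) ∧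
      (1 + Y * X) * (1 - Y * (R * X)) = 1 ∧ (1 - Y * (R * X)) * (1 + Y * X) = 1 := by
  have k1 : X * (Y * R) = 1 - R := by
    have h := hR1
    rw [Matrix.add_mul, Matrix.one_mul] at h
    rw [← Matrix.mul_assoc, eq_sub_iff_add_eq']
    exact h
  have k1' : R * (X * Y) = 1 - R := by
    have h := hR2
    rw [Matrix.mul_add, Matrix.mul_one] at h
    rw [eq_sub_iff_add_eq']
    exact h
  have k2 : X * (Y * (R * X)) = X - R * X :=
    calc X * (Y * (R * X)) = X * (Y * R) * X := by simp only [Matrix.mul_assoc]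
    _ = (1 - R) * X := by rw [k1]
    _ = X - R * X := by rw [Matrix.sub_mul, Matrix.one_mul]
  have k2' : R * (X * (Y * X)) = X - R * X :=
    calc R * (X * (Y * X)) = R * (X * Y) * X := by simp only [Matrix.mul_assoc]
    _ = (1 - R) * X := by rw [k1']
    _ = X - R * X := by rw [Matrix.sub_mul, Matrix.one_mul]
  set S : Matrix q q A := 1 - Y * (R * X) with hS
  have hS1 : (1 + Y * X) * S = 1 := by
    have expand : (1 + Y * X) * S
        = 1 - Y * (R * X) + (Y * X - Y * (X * (Y * (R * X)))) := by
      rw [hS]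
      simp only [Matrix.mul_add, Matrix.add_mul, Matrix.mul_sub, Matrix.sub_mul,
        Matrix.mul_one, Matrix.one_mul, Matrix.mul_assoc]
      abel
    rw [expand, k2, Matrix.mul_sub]
    abel
  have hS2 : S * (1 + Y * X) = 1 := by
    have expand : S * (1 + Y * X)
        = 1 + Y * X - (Y * (R * X) + Y * (R * (X * (Y * X)))) := by
      rw [hS]
      simp only [Matrix.mul_add, Matrix.add_mul, Matrix.mul_sub, Matrix.sub_mul,
        Matrix.mul_one, Matrix.one_mul, Matrix.mul_assoc]
      abel
    rw [expand, k2', Matrix.mul_sub]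
    abel
  have hEp : ∀ b : Matrix p q A, IsUnit (fromBlocks 1 b 0 1 : Matrix (p ⊕ q) (p ⊕ q) A) := by
    intro b
    refine isUnit_iff_exists.2 ⟨fromBlocks 1 (-b) 0 1, ?_, ?_⟩ <;>
      · rw [fromBlocks_multiply]; simp [fromBlocks_one]
  have hEm : ∀ c : Matrix q p A, IsUnit (fromBlocks 1 0 c 1 : Matrix (p ⊕ q) (p ⊕ q) A) := by
    intro c
    refine isUnit_iff_exists.2 ⟨fromBlocks 1 0 (-c) 1, ?_, ?_⟩ <;>
      · rw [fromBlocks_multiply]; simp [fromBlocks_one]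
  have hDu : IsUnit (fromBlocks (1 + X * Y) 0 0 1 : Matrix (p ⊕ q) (p ⊕ q) A) := by
    refine isUnit_iff_exists.2 ⟨fromBlocks R 0 0 1, ?_, ?_⟩ <;>
      · rw [fromBlocks_multiply]
        simp [hR1, hR2, fromBlocks_one]
  refine ⟨fun t => fromBlocks 1 (-((t:ℂ) • (X * S))) 0 1 *
      (fromBlocks 1 0 ((t:ℂ) • Y) 1 *
        (fromBlocks 1 ((t:ℂ) • X) 0 1 *
          (fromBlocks 1 0 (-((t:ℂ) • (S * Y))) 1 * fromBlocks (1 + X * Y) 0 0 1))),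
    ?_, ?_, ?_, ?_, hS1, hS2⟩
  · have hcs : ∀ {m n : Type} [Fintype m] [Fintype n] (M : Matrix m n A),
        Continuous fun t : ℝ => (t : ℂ) • M := by
      intro m n _ _ M
      exact (Complex.continuous_ofReal).smul continuous_const
    refine Continuous.matrix_mul ?_ (Continuous.matrix_mul ?_ (Continuous.matrix_mul ?_
      (Continuous.matrix_mul ?_ continuous_const)))
    · exact Continuous.matrix_fromBlocks continuous_const ((hcs _).neg) continuous_const
        continuous_const
    · exact Continuous.matrix_fromBlocks continuous_const continuous_const (hcs _)
        continuous_const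
    · exact Continuous.matrix_fromBlocks continuous_const (hcs _) continuous_const
        continuous_const
    · exact Continuous.matrix_fromBlocks continuous_const continuous_const ((hcs _).neg)
        continuous_const
  · intro t
    exact (hEp _).mul ((hEm _).mul ((hEp _).mul ((hEm _).mul hDu)))
  · simp [fromBlocks_one]
  · simp only [Complex.ofReal_one, one_smul]
    have hYmul : Y * (1 + X * Y) = (1 + Y * X) * Y := by
      simp only [Matrix.mul_add, Matrix.add_mul, Matrix.mul_one, Matrix.one_mul,
        Matrix.mul_assoc]
    have c1 : (fromBlocks 1 0 (-(S * Y)) 1 : Matrix (p ⊕ q) (p ⊕ q) A) *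
        fromBlocks (1 + X * Y) 0 0 1 = fromBlocks (1 + X * Y) 0 (-Y) 1 := by
      rw [fromBlocks_multiply]
      have h : (-(S * Y)) * (1 + X * Y) = -Y := by
        rw [Matrix.neg_mul, Matrix.mul_assoc, hYmul, ← Matrix.mul_assoc, hS2, Matrix.one_mul]
      simp [h]
    rw [c1]
    have c2 : (fromBlocks 1 X 0 1 : Matrix (p ⊕ q) (p ⊕ q) A) *
        fromBlocks (1 + X * Y) 0 (-Y) 1 = fromBlocks 1 X (-Y) 1 := by
      rw [fromBlocks_multiply]
      have h : (1 : Matrix p p A) * (1 + X * Y) + X * (-Y) = 1 := by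
        rw [Matrix.one_mul, Matrix.mul_neg]
        abel
      simp [h]
    rw [c2]
    have c3 : (fromBlocks 1 0 Y 1 : Matrix (p ⊕ q) (p ⊕ q) A) *
        fromBlocks 1 X (-Y) 1 = fromBlocks 1 X 0 (Y * X + 1) := by
      rw [fromBlocks_multiply]
      simp
    rw [c3]
    have c4 : (fromBlocks 1 (-(X * S)) 0 1 : Matrix (p ⊕ q) (p ⊕ q) A) *
        (fromBlocks 1 X 0 (Y * X + 1) : Matrix (p ⊕ q) (p ⊕ q) A) =
          fromBlocks 1 0 0 (1 + Y * X) := by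
      rw [fromBlocks_multiply]
      have h : (1 : Matrix p p A) * X + (-(X * S)) * (Y * X + 1) = 0 := by
        rw [Matrix.one_mul, Matrix.neg_mul, Matrix.mul_assoc, add_comm (Y * X) 1, hS2,
          Matrix.mul_one]
        abel
      have h2 : (0 : Matrix q p A) * X + 1 * (Y * X + 1) = 1 + Y * X := by
        rw [Matrix.zero_mul, Matrix.one_mul, zero_add, add_comm]
      simp [h, h2]
      exact ⟨by simpa using h, by simpa using h2⟩
    rw [c4]

lemma padMat_self {A : Type*} [Ring A] {k : ℕ} (M : Matrix (Fin k) (Fin k) A) :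
    padMat M k = M := by
  funext i j
  simp [padMat, i.isLt, j.isLt]

open Matrix in
lemma submatrix_fromBlocks_pad {A : Type*} [Ring A] {n : ℕ} (M : Matrix (Fin n) (Fin n) A) :
    (fromBlocks M 0 0 (1 : Matrix (Fin 1) (Fin 1) A)).submatrix
      ⇑(finSumFinEquiv (m := n) (n := 1)).symm ⇑(finSumFinEquiv (m := n) (n := 1)).symm
      = padMat M (n + 1) := by
  funext i j
  obtain ⟨s, rfl⟩ := finSumFinEquiv.surjective i
  obtain ⟨s', rfl⟩ := finSumFinEquiv.surjective j
  simp only [Matrix.submatrix_apply, Equiv.symm_apply_apply]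
  rcases s with a | a <;> rcases s' with b | b <;>
    simp [padMat, finSumFinEquiv_apply_left, finSumFinEquiv_apply_right,
      a.isLt, Matrix.one_apply, Fin.val_eq_val]
  · intro h; have := b.isLt; omega
  · intro h; exact absurd (Subsingleton.elim _ _) h


lemma submatrix_fromBlocks_diag_last {A : Type*} [Ring A] {n : ℕ}
    (V : Matrix (Fin 1) (Fin 1) A) :
    (fromBlocks (1 : Matrix (Fin n) (Fin n) A) 0 0 V).submatrix
      ⇑(finSumFinEquiv (m := n) (n := 1)).symm ⇑(finSumFinEquiv (m := n) (n := 1)).symm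
      = Matrix.of (fun i j : Fin (n+1) =>
          if (i : ℕ) = (j : ℕ) then (if (i : ℕ) = n then V 0 0 else 1) else 0) := by
  funext i j
  obtain ⟨s, rfl⟩ := finSumFinEquiv.surjective i
  obtain ⟨s', rfl⟩ := finSumFinEquiv.surjective j
  simp only [Matrix.submatrix_apply, Equiv.symm_apply_apply]
  rcases s with a | a <;> rcases s' with b | b
  case inl.inl =>
    have ha := a.isLt
    simp [finSumFinEquiv_apply_left, Matrix.one_apply, Fin.val_eq_val]
    split_ifs <;> first | rfl | omega
  case inl.inr =>
    have ha := a.isLt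
    simp [finSumFinEquiv_apply_left, finSumFinEquiv_apply_right, Fin.val_eq_zero b]
    intro h; omega
  case inr.inl =>
    have hb := b.isLt
    simp [finSumFinEquiv_apply_left, finSumFinEquiv_apply_right, Fin.val_eq_zero a]
    intro h; omega
  case inr.inr =>
    have ha : a = 0 := Subsingleton.elim _ _
    have hb : b = 0 := Subsingleton.elim _ _
    subst ha hb
    simp [finSumFinEquiv_apply_right]

lemma submatrix_fromBlocks_pad' {A : Type*} [Ring A] {n : ℕ} (V : Matrix (Fin 1) (Fin 1) A) :
    (fromBlocks V 0 0 (1 : Matrix (Fin n) (Fin n) A)).submatrix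
      ⇑((finSumFinEquiv (m := 1) (n := n)).trans (finCongr (by omega))).symm
      ⇑((finSumFinEquiv (m := 1) (n := n)).trans (finCongr (by omega))).symm
      = padMat V (n + 1) := by
  set e' := (finSumFinEquiv (m := 1) (n := n)).trans (finCongr (by omega : 1 + n = n + 1))
    with he'
  funext i j
  obtain ⟨s, rfl⟩ := e'.surjective i
  obtain ⟨s', rfl⟩ := e'.surjective j
  simp only [Matrix.submatrix_apply, Equiv.symm_apply_apply]
  have hval : ∀ x : Fin 1 ⊕ Fin n, (e' x : ℕ) = Sum.elim (fun a : Fin 1 => (a : ℕ))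
      (fun b : Fin n => (b : ℕ) + 1) x := by
    rintro (a | b) <;>
      simp [he', finSumFinEquiv_apply_left, finSumFinEquiv_apply_right, add_comm]
  rcases s with a | a <;> rcases s' with b | b
  case inl.inl =>
    have ha : a = 0 := Subsingleton.elim _ _
    have hb : b = 0 := Subsingleton.elim _ _
    subst ha hb
    simp [padMat, hval]
  case inl.inr =>
    simp [padMat, hval, Fin.val_eq_zero a]
  case inr.inl =>
    simp [padMat, hval, Fin.val_eq_zero b]
  case inr.inr =>
    simp [padMat, hval, Matrix.one_apply, Fin.val_eq_val]

open Matrix in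
lemma submatrix_fromBlocks_diag_last' {A : Type*} [Ring A] {m : ℕ} (u : A) :
    (fromBlocks (1 : Matrix (Fin 1) (Fin 1) A) 0 0
        (Matrix.diagonal (fun j : Fin (m+1) => if (j : ℕ) = m then u else 1))).submatrix
      ⇑((finSumFinEquiv (m := 1) (n := m+1)).trans (finCongr (by omega))).symm
      ⇑((finSumFinEquiv (m := 1) (n := m+1)).trans (finCongr (by omega))).symm
      = Matrix.of (fun i j : Fin (m+2) =>
          if (i : ℕ) = (j : ℕ) then (if (i : ℕ) = m + 1 then u else 1) else 0) := by
  set e' := (finSumFinEquiv (m := 1) (n := m+1)).trans (finCongr (by omega : 1 + (m+1) = m+2))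
    with he'
  funext i j
  obtain ⟨s, rfl⟩ := e'.surjective i
  obtain ⟨s', rfl⟩ := e'.surjective j
  simp only [Matrix.submatrix_apply, Equiv.symm_apply_apply]
  have hval : ∀ x : Fin 1 ⊕ Fin (m+1), (e' x : ℕ) = Sum.elim (fun a : Fin 1 => (a : ℕ))
      (fun b : Fin (m+1) => (b : ℕ) + 1) x := by
    rintro (a | b) <;>
      simp [he', finSumFinEquiv_apply_left, finSumFinEquiv_apply_right, add_comm]
  rcases s with a | a <;> rcases s' with b | b
  case inl.inl =>
    have ha : a = 0 := Subsingleton.elim _ _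
    have hb : b = 0 := Subsingleton.elim _ _
    subst ha hb
    simp [hval]
  case inl.inr =>
    simp [hval, Fin.val_eq_zero a]
  case inr.inl =>
    simp [hval, Fin.val_eq_zero b]
  case inr.inr =>
    have ha := a.isLt
    simp [hval, Matrix.diagonal_apply, Fin.val_eq_val]

open Matrix in
lemma K1_reduce {A : Type*} [NormedRing A] [NormedAlgebra ℂ A]
    (a₁ a₂ b₁ b₂ : A) (h11 : b₁ * a₁ = 1) (h22 : b₂ * a₂ = 1)
    (h12 : b₁ * a₂ = 0) (h21 : b₂ * a₁ = 0)
    (n : ℕ) (U : Matrix (Fin n) (Fin n) A) (hU : IsUnit U) :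
    ∃ (u : A) (hu : IsUnit u), Quot.mk (K1Rel A) ⟨⟨n, U⟩, hU⟩ = K1classOfUnit hu := by
  obtain _ | m := n
  · -- n = 0 : trivial, use u = 1
    refine ⟨1, isUnit_one, Quot.sound ⟨1, Nat.zero_le 1, le_refl 1,
      fun _ => (1 : Matrix (Fin 1) (Fin 1) A), continuous_const,
      fun t _ => isUnit_one, ?_, ?_⟩⟩
    · funext i j
      have hij : i = j := Subsingleton.elim _ _
      subst hij
      simp [padMat, Matrix.one_apply]
    · rw [padMat_self]
      funext i j
      fin_cases i <;> fin_cases j <;> simp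
  · 
    -- the iterated isometries
    have hpow : ∀ i : ℕ, b₂ ^ i * a₂ ^ i = 1 := by
      intro i
      induction i with
      | zero => simp
      | succ k ih =>
        rw [pow_succ, pow_succ', mul_assoc, ← mul_assoc b₂ a₂ (a₂ ^ k), h22, one_mul, ih]
    have key : ∀ i j : ℕ, (b₁ * b₂ ^ i) * (a₂ ^ j * a₁) = if i = j then 1 else 0 := by
      intro i j
      rcases lt_trichotomy i j with h | h | h
      · obtain ⟨k, rfl⟩ : ∃ k, j = i + (k + 1) := ⟨j - i - 1, by omega⟩
        rw [if_neg (by omega), pow_add]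
        calc (b₁ * b₂ ^ i) * ((a₂ ^ i * a₂ ^ (k+1)) * a₁)
            = b₁ * ((b₂ ^ i * a₂ ^ i) * (a₂ ^ (k+1) * a₁)) := by simp only [mul_assoc]
          _ = b₁ * (a₂ ^ (k+1) * a₁) := by rw [hpow, one_mul]
          _ = 0 := by
              rw [pow_succ', mul_assoc, ← mul_assoc b₁ a₂, h12, zero_mul]
      · subst h
        rw [if_pos rfl]
        calc (b₁ * b₂ ^ i) * (a₂ ^ i * a₁)
            = b₁ * ((b₂ ^ i * a₂ ^ i) * a₁) := by simp only [mul_assoc]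
          _ = 1 := by rw [hpow, one_mul, h11]
      · obtain ⟨k, rfl⟩ : ∃ k, i = j + (k + 1) := ⟨i - j - 1, by omega⟩
        rw [if_neg (by omega)]
        have hsplit : b₂ ^ (j + (k + 1)) = b₂ ^ (k + 1) * b₂ ^ j := by
          rw [add_comm, pow_add]
        rw [hsplit]
        calc (b₁ * (b₂ ^ (k+1) * b₂ ^ j)) * (a₂ ^ j * a₁)
            = b₁ * (b₂ ^ (k+1) * ((b₂ ^ j * a₂ ^ j) * a₁)) := by simp only [mul_assoc]
          _ = b₁ * (b₂ ^ (k+1) * a₁) := by rw [hpow, one_mul]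
          _ = 0 := by rw [pow_succ, mul_assoc, h21, mul_zero, mul_zero]
    -- row and column
    set T : Matrix (Fin (m+1)) (Fin 1) A := fun i _ => b₁ * b₂ ^ (i : ℕ) with hT
    set S0 : Matrix (Fin 1) (Fin (m+1)) A := fun _ j => a₂ ^ (j : ℕ) * a₁ with hS0
    have hTS : T * S0 = 1 := by
      funext i j
      rw [Matrix.mul_apply, Fin.sum_univ_one]
      show (b₁ * b₂ ^ (i : ℕ)) * (a₂ ^ (j : ℕ) * a₁) = _
      rw [key, Matrix.one_apply]
      simp [Fin.val_eq_val]
    set X : Matrix (Fin (m+1)) (Fin 1) A := (U - 1) * T with hX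
    set Y : Matrix (Fin 1) (Fin (m+1)) A := S0 with hY
    have hXY : 1 + X * Y = U := by
      rw [hX, hY, Matrix.mul_assoc, hTS, Matrix.mul_one]
      abel
    have hR1 : (1 + X * Y) * (hU.unit⁻¹ : (Matrix (Fin (m+1)) (Fin (m+1)) A)ˣ).1 = 1 := by
      rw [hXY]
      exact hU.mul_val_inv
    have hR2 : (hU.unit⁻¹ : (Matrix (Fin (m+1)) (Fin (m+1)) A)ˣ).1 * (1 + X * Y) = 1 := by
      rw [hXY]
      exact hU.val_inv_mul
    obtain ⟨W, Wc, Wu, W0, W1, hu1M, hu2M⟩ := elementary_path X Y _ hR1 hR2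
    set uM : Matrix (Fin 1) (Fin 1) A := 1 + Y * X with huM
    set uM' : Matrix (Fin 1) (Fin 1) A :=
      1 - Y * ((hU.unit⁻¹ : (Matrix (Fin (m+1)) (Fin (m+1)) A)ˣ).1 * X) with huM'
    set u : A := uM 0 0 with hu_def
    have one_by : ∀ M P : Matrix (Fin 1) (Fin 1) A, M * P = 1 → M 0 0 * P 0 0 = 1 := by
      intro M P h
      have h' := congrFun (congrFun h 0) 0
      rwa [Matrix.mul_apply, Fin.sum_univ_one, Matrix.one_apply_eq] at h'
    have hu : IsUnit u := isUnit_iff_exists.2 ⟨uM' 0 0, one_by _ _ hu1M, one_by _ _ hu2M⟩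
    have huMunit : IsUnit uM := isUnit_iff_exists.2 ⟨uM', hu1M, hu2M⟩
    have hMu : (Matrix.of ![![u]] : Matrix (Fin 1) (Fin 1) A) = uM := by
      funext i j
      fin_cases i <;> fin_cases j <;> simp [hu_def]
    -- the diagonal matrix with u in the last slot
    set e₁ := finSumFinEquiv (m := (m+1)) (n := 1) with he₁
    set Dl : Matrix (Fin ((m+1)+1)) (Fin ((m+1)+1)) A :=
      (fromBlocks 1 0 0 uM).submatrix ⇑e₁.symm ⇑e₁.symm with hDl
    have hsub : ∀ {α : Type} [inst : Fintype α] [inst2 : DecidableEq α]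
        (e : α ≃ Fin ((m+1)+1)) (M : Matrix α α A), IsUnit M →
        IsUnit (M.submatrix ⇑e.symm ⇑e.symm) := by
      intro α _ _ e M hM
      obtain ⟨V, hv1, hv2⟩ := isUnit_iff_exists.1 hM
      refine isUnit_iff_exists.2 ⟨V.submatrix ⇑e.symm ⇑e.symm, ?_, ?_⟩
      · rw [Matrix.submatrix_mul_equiv, hv1, Matrix.submatrix_one_equiv]
      · rw [Matrix.submatrix_mul_equiv, hv2, Matrix.submatrix_one_equiv]
    have hDlunit : IsUnit Dl := by
      refine hsub e₁ _ (isUnit_iff_exists.2 ⟨fromBlocks 1 0 0 uM', ?_, ?_⟩)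
      · rw [fromBlocks_multiply]
        simp [hu1M, fromBlocks_one]
      · rw [fromBlocks_multiply]
        simp [hu2M, fromBlocks_one]
    -- first relation
    have rel1 : K1Rel A ⟨⟨(m+1), U⟩, hU⟩ ⟨⟨(m+1)+1, Dl⟩, hDlunit⟩ := by
      refine ⟨(m+1)+1, Nat.le_succ _, le_refl _,
        fun t => (W t).submatrix ⇑e₁.symm ⇑e₁.symm, ?_, fun t _ => hsub e₁ _ (Wu t), ?_, ?_⟩
      · exact continuous_matrix fun i j => Wc.matrix_elem _ _
      · show (W 0).submatrix _ _ = padMat U ((m+1)+1)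
        rw [W0, hXY]
        exact submatrix_fromBlocks_pad U
      · show (W 1).submatrix _ _ = padMat Dl ((m+1)+1)
        rw [W1, padMat_self, hDl]
    -- second relation
    set X' : Matrix (Fin 1) (Fin (m+1)) A := fun _ j => if (j : ℕ) = m then u - 1 else 0 with hX'
    set Y' : Matrix (Fin (m+1)) (Fin 1) A := fun i _ => if (i : ℕ) = m then 1 else 0 with hY'
    have hX'Y' : 1 + X' * Y' = uM := by
      have hsum : ∑ k : Fin (m+1), X' 0 k * Y' k 0 = u - 1 := by
        rw [Finset.sum_eq_single (⟨m, by omega⟩ : Fin (m+1))]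
        · simp [hX', hY']
        · intro b _ hb
          have hbv : (b : ℕ) ≠ m := by
            intro h
            exact hb (Fin.ext h)
          simp [hX', hY', hbv]
        · intro h
          exact absurd (Finset.mem_univ _) h
      funext i j
      have hi : i = 0 := Subsingleton.elim _ _
      have hj : j = 0 := Subsingleton.elim _ _
      subst hi hj
      rw [Matrix.add_apply, Matrix.mul_apply, hsum, Matrix.one_apply_eq]
      show 1 + (u - 1) = uM 0 0
      rw [← hu_def]
      abel
    set D' : Matrix (Fin (m+1)) (Fin (m+1)) A :=
      Matrix.diagonal (fun j : Fin (m+1) => if (j : ℕ) = m then u else 1) with hD'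
    have hY'X' : 1 + Y' * X' = D' := by
      funext i j
      rw [Matrix.add_apply, Matrix.mul_apply, Fin.sum_univ_one]
      show (1 : Matrix (Fin (m+1)) (Fin (m+1)) A) i j +
        (if (i : ℕ) = m then (1:A) else 0) * (if (j : ℕ) = m then u - 1 else 0) =
        Matrix.diagonal _ i j
      by_cases hij : i = j
      · subst hij
        by_cases hi : (i : ℕ) = m <;>
          simp [Matrix.one_apply_eq, Matrix.diagonal_apply_eq, hi] <;> abel
      · have hvij : ¬ ((i : ℕ) = m ∧ (j : ℕ) = m) := by
          rintro ⟨h1, h2⟩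
          exact hij (Fin.ext (h1.trans h2.symm))
        by_cases hi : (i : ℕ) = m <;> by_cases hj : (j : ℕ) = m <;>
          simp [Matrix.one_apply_ne hij, Matrix.diagonal_apply_ne _ hij, hi, hj] <;>
          tauto
    have hR1' : (1 + X' * Y') * uM' = 1 := by rw [hX'Y']; exact hu1M
    have hR2' : uM' * (1 + X' * Y') = 1 := by rw [hX'Y']; exact hu2M
    obtain ⟨W2, W2c, W2u, W20, W21, _, _⟩ := elementary_path X' Y' uM' hR1' hR2'
    set e₂ := (finSumFinEquiv (m := 1) (n := (m+1))).trans
      (finCongr (by omega : 1 + (m+1) = (m+1) + 1)) with he₂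
    have hMuUnit : IsUnit (Matrix.of ![![u]] : Matrix (Fin 1) (Fin 1) A) := by
      rw [hMu]; exact huMunit
    have rel2 : K1Rel A ⟨⟨1, Matrix.of ![![u]]⟩, hMuUnit⟩ ⟨⟨(m+1)+1, Dl⟩, hDlunit⟩ := by
      refine ⟨(m+1)+1, by norm_num, le_refl _,
        fun t => (W2 t).submatrix ⇑e₂.symm ⇑e₂.symm, ?_, fun t _ => hsub e₂ _ (W2u t), ?_, ?_⟩
      · exact continuous_matrix fun i j => W2c.matrix_elem _ _
      · show (W2 0).submatrix _ _ = padMat (Matrix.of ![![u]]) ((m+1)+1)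
        rw [W20, hX'Y', ← hMu]
        exact submatrix_fromBlocks_pad' _
      · show (W2 1).submatrix _ _ = padMat Dl ((m+1)+1)
        rw [W21, hY'X', padMat_self, hD']
        have hone : Dl = Matrix.of (fun i j : Fin ((m+1)+1) =>
            if (i : ℕ) = (j : ℕ) then (if (i : ℕ) = (m+1) then uM 0 0 else 1) else 0) := by
          rw [hDl, he₁]
          exact submatrix_fromBlocks_diag_last uM
        rw [hone, he₂, ← hu_def]
        exact submatrix_fromBlocks_diag_last' u
    exact ⟨u, hu, (Quot.sound rel1).trans (Quot.sound rel2).symm⟩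

end Aux

/-- **Remark 2.5.** Let `A` be a unital, properly infinite Banach algebra, witnessed by
`a₁, a₂, b₁, b₂ ∈ A` with `bₗ * aₖ = δₖₗ·1`. Then `u ↦ [u]₁, Inv(A) → K₁(A)` is
surjective; in particular, if `Inv(A)` is connected then `K₁(A) = {0}`. -/
theorem K1_surjective_of_properly_infinite
    {A : Type*} [NormedRing A] [NormedAlgebra ℂ A] [CompleteSpace A]
    (a₁ a₂ b₁ b₂ : A) (h11 : b₁ * a₁ = 1) (h22 : b₂ * a₂ = 1)
    (h12 : b₁ * a₂ = 0) (h21 : b₂ * a₁ = 0) :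
    (∀ x : K1 A, ∃ (u : A) (hu : IsUnit u), x = K1classOfUnit hu) ∧
      (IsConnected {a : A | IsUnit a} → Subsingleton (K1 A)) := by
  have hsurj : ∀ x : K1 A, ∃ (u : A) (hu : IsUnit u), x = K1classOfUnit hu := by
    intro x
    obtain ⟨⟨⟨n, U⟩, hU⟩, rfl⟩ := Quot.exists_rep x
    exact K1_reduce a₁ a₂ b₁ b₂ h11 h22 h12 h21 n U hU
  refine ⟨hsurj, fun hconn => ?_⟩
  have hpc : IsPathConnected {a : A | IsUnit a} :=
    (Units.isOpen.isConnected_iff_isPathConnected).1 hconn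
  constructor
  intro x y
  obtain ⟨u, hu, rfl⟩ := hsurj x
  obtain ⟨v, hv, rfl⟩ := hsurj y
  obtain ⟨γ, hγ⟩ := hpc.joinedIn u hu v hv
  show Quot.mk (K1Rel A) ⟨⟨1, Matrix.of ![![u]]⟩, isUnit_one_by_one hu⟩
    = Quot.mk (K1Rel A) ⟨⟨1, Matrix.of ![![v]]⟩, isUnit_one_by_one hv⟩
  refine Quot.sound ⟨1, le_refl 1, le_refl 1,
    fun t => Matrix.of ![![γ (Set.projIcc 0 1 zero_le_one t)]], ?_, ?_, ?_, ?_⟩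
  · apply continuous_matrix
    intro i j
    have h : (fun t => (Matrix.of ![![γ (Set.projIcc 0 1 zero_le_one t)]] :
        Matrix (Fin 1) (Fin 1) A) i j) = fun t => γ (Set.projIcc 0 1 zero_le_one t) := by
      funext t
      fin_cases i <;> fin_cases j <;> simp
    rw [h]
    exact γ.continuous.comp continuous_projIcc
  · intro t _
    exact isUnit_one_by_one (hγ _)
  · have h : γ (Set.projIcc 0 1 zero_le_one 0) = u := by
      rw [Set.projIcc_left]
      exact γ.source
    show Matrix.of ![![γ (Set.projIcc 0 1 zero_le_one 0)]] = padMat (Matrix.of ![![u]]) 1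
    rw [padMat_self, h]
  · have h : γ (Set.projIcc 0 1 zero_le_one 1) = v := by
      rw [Set.projIcc_right]
      exact γ.target
    show Matrix.of ![![γ (Set.projIcc 0 1 zero_le_one 1)]] = padMat (Matrix.of ![![v]]) 1
    rw [padMat_self, h]
end
end

section
/- Let X be a complex Banach space such that B(X) is stably finite (every one-sided invertible matrix over B(X) is invertible). Then for every m ≥ 1, every Fredholm operator on Xᵐ has index zero, and Xᵐ is not linearly homeomorphic to any of its proper closed finite-codimensional subspaces. -/
noncomputable section

open Module

/-- A continuous linear map is *strictly singular* if it is not bounded below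
on any infinite-dimensional subspace. -/
def IsStrictlySingular {X Y : Type*} [NormedAddCommGroup X] [NormedSpace ℂ X]
    [NormedAddCommGroup Y] [NormedSpace ℂ Y] (T : X →L[ℂ] Y) : Prop :=
  ∀ V : Submodule ℂ X, (∃ c > (0:ℝ), ∀ x ∈ V, c * ‖x‖ ≤ ‖T x‖) → FiniteDimensional ℂ V

/-- A continuous linear map is *Fredholm* if it has finite-dimensional kernel and
closed range of finite codimension. -/
def IsFredholm {X Y : Type*} [NormedAddCommGroup X] [NormedSpace ℂ X]
    [NormedAddCommGroup Y] [NormedSpace ℂ Y] (T : X →L[ℂ] Y) : Prop :=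
  FiniteDimensional ℂ (LinearMap.ker (T : X →ₗ[ℂ] Y)) ∧ IsClosed (LinearMap.range (T : X →ₗ[ℂ] Y) : Set Y) ∧
    FiniteDimensional ℂ (Y ⧸ LinearMap.range (T : X →ₗ[ℂ] Y))

/-- The Fredholm index. -/
def fredholmIndex {X Y : Type*} [NormedAddCommGroup X] [NormedSpace ℂ X]
    [NormedAddCommGroup Y] [NormedSpace ℂ Y] (T : X →L[ℂ] Y) : ℤ :=
  (finrank ℂ (LinearMap.ker (T : X →ₗ[ℂ] Y)) : ℤ) - (finrank ℂ (Y ⧸ LinearMap.range (T : X →ₗ[ℂ] Y)) : ℤ)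

/-!
Stable finiteness of `B(X)` passes to `B(Xᵐ)` through the block-matrix embedding
`B(Xᵐ) → Mₘ(B(X))`. If `B(E)` is Dedekind-finite, then `E ≇ E × G` for every `G ≠ 0`: an
isomorphism would make the inclusion of the first factor a one-sided but not two-sided invertible
operator. A proper closed complemented subspace `W ≅ E` with complement `C` would give
`E ≅ W × C ≅ E × C`. A Fredholm operator `T` gives `E ≅ ran T × ker T` and `E ≅ ran T × C` with
`dim C = codim ran T`; if the two dimensions differed by `d > 0`, cancelling the common part would
give `E ≅ E × 𝕜ᵈ`.
-/

namespace ContinuousLinearMap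

variable {R M ι : Type*} [CommSemiring R] [TopologicalSpace M] [AddCommMonoid M] [Module R M]
  [ContinuousAdd M] [Fintype ι] [DecidableEq ι]

def toBlockMatrix (f : (ι → M) →L[R] (ι → M)) : Matrix ι ι (M →L[R] M) :=
  Matrix.of fun i j => proj i ∘L f ∘L single R (fun _ => M) j

/-- Multiplicativity and injectivity of `toBlockMatrix` are inherited from the algebraic
isomorphism `endVecRingEquivMatrixEnd` through this identity. -/
theorem mapMatrix_toBlockMatrix (f : (ι → M) →L[R] (ι → M)) :
    toLinearMapRingHom.mapMatrix (toBlockMatrix f) = endVecRingEquivMatrixEnd ι R M f :=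
  rfl

theorem mapMatrix_toLinearMapRingHom_injective :
    Function.Injective (toLinearMapRingHom.mapMatrix : Matrix ι ι (M →L[R] M) →+* _) :=
  Matrix.map_injective coe_injective

theorem toBlockMatrix_injective : Function.Injective (toBlockMatrix (R := R) (M := M) (ι := ι)) :=
  fun f g h => coe_injective <| (endVecRingEquivMatrixEnd ι R M).injective <| by
    rw [← mapMatrix_toBlockMatrix, ← mapMatrix_toBlockMatrix, h]

theorem toBlockMatrix_mul (f g : (ι → M) →L[R] (ι → M)) :
    toBlockMatrix (f * g) = toBlockMatrix f * toBlockMatrix g :=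
  mapMatrix_toLinearMapRingHom_injective <| by
    rw [map_mul, mapMatrix_toBlockMatrix, mapMatrix_toBlockMatrix, mapMatrix_toBlockMatrix]
    exact map_mul ((endVecRingEquivMatrixEnd ι R M).toRingHom.comp toLinearMapRingHom) f g

theorem toBlockMatrix_one : toBlockMatrix (1 : (ι → M) →L[R] (ι → M)) = 1 :=
  mapMatrix_toLinearMapRingHom_injective <| by
    rw [map_one, mapMatrix_toBlockMatrix]
    exact map_one ((endVecRingEquivMatrixEnd ι R M).toRingHom.comp toLinearMapRingHom)

instance [IsStablyFiniteRing (M →L[R] M)] (n : ℕ) :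
    IsDedekindFiniteMonoid ((Fin n → M) →L[R] (Fin n → M)) :=
  .of_injective
    ({ toFun := toBlockMatrix, map_one' := toBlockMatrix_one, map_mul' := toBlockMatrix_mul } :
      ((Fin n → M) →L[R] (Fin n → M)) →* Matrix (Fin n) (Fin n) (M →L[R] M))
    toBlockMatrix_injective

end ContinuousLinearMap

theorem isEmpty_continuousLinearEquiv_prod {R E G : Type*} [Semiring R] [TopologicalSpace E]
    [AddCommMonoid E] [Module R E] [TopologicalSpace G] [AddCommMonoid G] [Module R G]
    [IsDedekindFiniteMonoid (E →L[R] E)] [Nontrivial G] :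
    IsEmpty (E ≃L[R] E × G) := by
  refine ⟨fun e => ?_⟩
  have hleft : (ContinuousLinearMap.fst R E G ∘L (e : E →L[R] E × G)) *
      ((e.symm : E × G →L[R] E) ∘L ContinuousLinearMap.inl R E G) = 1 := by
    ext x; simp
  obtain ⟨g, hg⟩ := exists_ne (0 : G)
  have := congr($(mul_eq_one_symm hleft) (e.symm (0, g)))
  exact hg (by simpa using this.symm)

theorem Submodule.ClosedComplemented.isEmpty_continuousLinearEquiv {R E : Type*} [Ring R]
    [TopologicalSpace E] [AddCommGroup E] [IsTopologicalAddGroup E] [Module R E]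
    [IsDedekindFiniteMonoid (E →L[R] E)] {W : Submodule R E} (hW : W.ClosedComplemented)
    (hne : W ≠ ⊤) : IsEmpty (E ≃L[R] W) := by
  refine ⟨fun e => ?_⟩
  obtain ⟨C, hWC⟩ := hW.exists_isTopCompl
  have : Nontrivial C := Submodule.nontrivial_iff_ne_bot.mpr fun hC =>
    hne (codisjoint_bot.mp (hC ▸ hWC.isCompl.codisjoint))
  exact (isEmpty_continuousLinearEquiv_prod (G := C)).false <|
    (Submodule.prodEquivOfIsTopCompl _ _ hWC).symm.trans (e.symm.prodCongr (.refl R C))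

section Finrank

variable {𝕜 E Z K F : Type*} [NontriviallyNormedField 𝕜] [CompleteSpace 𝕜]
  [NormedAddCommGroup E] [NormedSpace 𝕜 E] [NormedAddCommGroup Z] [NormedSpace 𝕜 Z]
  [NormedAddCommGroup K] [NormedSpace 𝕜 K] [FiniteDimensional 𝕜 K]
  [NormedAddCommGroup F] [NormedSpace 𝕜 F] [FiniteDimensional 𝕜 F]
  [IsDedekindFiniteMonoid (E →L[𝕜] E)]

theorem finrank_le_of_continuousLinearEquiv_prod (e₁ : E ≃L[𝕜] Z × K) (e₂ : E ≃L[𝕜] Z × F) :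
    finrank 𝕜 F ≤ finrank 𝕜 K := by
  by_contra! h
  have : Nonempty (Fin (finrank 𝕜 F - finrank 𝕜 K)) := ⟨⟨0, by omega⟩⟩
  let G := Fin (finrank 𝕜 F - finrank 𝕜 K) → 𝕜
  have hF : F ≃L[𝕜] K × G := .ofFinrankEq <| by
    rw [finrank_prod, finrank_fin_fun]; omega
  exact (isEmpty_continuousLinearEquiv_prod (G := G)).false <|
    e₂.trans <| ((ContinuousLinearEquiv.refl 𝕜 Z).prodCongr hF).trans <|
      (ContinuousLinearEquiv.prodAssoc 𝕜 Z K G).symm.trans <|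
        e₁.symm.prodCongr (ContinuousLinearEquiv.refl 𝕜 G)

theorem finrank_eq_of_continuousLinearEquiv_prod (e₁ : E ≃L[𝕜] Z × K) (e₂ : E ≃L[𝕜] Z × F) :
    finrank 𝕜 K = finrank 𝕜 F :=
  (finrank_le_of_continuousLinearEquiv_prod e₂ e₁).antisymm
    (finrank_le_of_continuousLinearEquiv_prod e₁ e₂)

end Finrank

theorem ContinuousLinearMap.nonempty_equiv_range_prod_ker {𝕜 E F : Type*} [RCLike 𝕜]
    [NormedAddCommGroup E] [NormedSpace 𝕜 E] [CompleteSpace E]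
    [NormedAddCommGroup F] [NormedSpace 𝕜 F] [CompleteSpace F] (T : E →L[𝕜] F)
    [FiniteDimensional 𝕜 T.ker] (hT : IsClosed (T.range : Set F)) :
    Nonempty (E ≃L[𝕜] T.range × T.ker) := by
  obtain ⟨C, hKC⟩ := (Submodule.ClosedComplemented.of_finiteDimensional T.ker).exists_isTopCompl
  have := hKC.isClosed'.completeSpace_coe
  let S := T ∘L C.subtypeL
  have hrange : S.range = T.range := by
    change ((T : E →ₗ[𝕜] F) ∘ₗ C.subtype).range = _
    rw [LinearMap.range_comp, Submodule.range_subtype, Submodule.map_eq_range_iff]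
    exact hKC.isCompl.codisjoint.symm
  have hinj : Function.Injective S := by
    refine (injective_iff_map_eq_zero S).mpr fun x hx => Subtype.ext ?_
    exact LinearMap.disjoint_ker.mp hKC.isCompl.disjoint.symm x x.2 hx
  have hS : IsClosed (Set.range S) := by
    rw [← hrange, LinearMap.coe_range, ContinuousLinearMap.coe_coe] at hT
    exact hT
  exact ⟨(Submodule.prodEquivOfIsTopCompl _ _ hKC.symm).symm.trans <|
    ((S.equivRange hinj hS).trans (.ofEq _ _ hrange)).prodCongr (.refl 𝕜 _)⟩

theorem IsFredholm.fredholmIndex_eq_zero {E : Type*} [NormedAddCommGroup E] [NormedSpace ℂ E]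
    [CompleteSpace E] [IsDedekindFiniteMonoid (E →L[ℂ] E)] {T : E →L[ℂ] E}
    (hT : IsFredholm T) : fredholmIndex T = 0 := by
  obtain ⟨hK, hR, hQ⟩ := hT
  obtain ⟨e⟩ := T.nonempty_equiv_range_prod_ker hR
  obtain ⟨C, hRC⟩ :=
    (Submodule.ClosedComplemented.of_finiteDimensional_quotient hR).exists_isTopCompl
  let eQ := (Submodule.quotientEquivOfIsTopCompl _ _ hRC).toLinearEquiv
  have : FiniteDimensional ℂ C := eQ.finiteDimensional
  rw [fredholmIndex, finrank_eq_of_continuousLinearEquiv_prod e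
    (Submodule.prodEquivOfIsTopCompl _ _ hRC).symm, eQ.finrank_eq, sub_self]

/-- If `B(X)` is stably finite, then for every `m ≥ 1` every Fredholm operator on `Xᵐ` has
index zero, and `Xᵐ` is not linearly homeomorphic to any proper closed finite-codimensional
subspace of itself. -/
theorem fredholm_index_zero_of_stably_finite
    {X : Type*} [NormedAddCommGroup X] [NormedSpace ℂ X] [CompleteSpace X]
    (hsf : ∀ (n : ℕ) (a b : Matrix (Fin n) (Fin n) (X →L[ℂ] X)), a * b = 1 → b * a = 1) :
    (∀ m : ℕ, 1 ≤ m → ∀ T : (Fin m → X) →L[ℂ] (Fin m → X),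
        IsFredholm T → fredholmIndex T = 0) ∧
      (∀ m : ℕ, 1 ≤ m → ∀ W : Submodule ℂ (Fin m → X), IsClosed (W : Set (Fin m → X)) →
        W ≠ ⊤ → FiniteDimensional ℂ ((Fin m → X) ⧸ W) →
          ¬ Nonempty ((Fin m → X) ≃L[ℂ] ↥W)) := by
  have : IsStablyFiniteRing (X →L[ℂ] X) := ⟨fun n => ⟨hsf n _ _⟩⟩
  refine ⟨fun m _ T hT => hT.fredholmIndex_eq_zero, fun m _ W hW hne _ => ?_⟩
  exact not_nonempty_iff.mpr <|
    (Submodule.ClosedComplemented.of_finiteDimensional_quotient hW).isEmpty_continuousLinearEquiv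
      hne
end
end
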